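/- Given a coherent casebase D, if D' ⊆ D is concise w.r.t. D (i.e., D' equals the set of examples in D that are surprising w.r.t. D'), then D' is the unique such subset. -/

import Mathlib

namespace AACBR

/-- In an AF with arguments `args` and attack `att`, a set `E` defends argument `a`
iff every attacker of `a` (within `args`) is attacked by some element of `E`. -/
def defends {A : Type} (args : Set A) (att : A → A → Prop) (E : Set A) (a : A) : Prop :=
  ∀ b ∈ args, att b a → ∃ c ∈ E, att c b

/-- `G_0` is the set of unattacked arguments; `G_{i+1}` is the set of arguments
defended by `G_i`. -/
def groundedSeq {A : Type} (args : Set A) (att : A → A → Prop) : ℕ → Set A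
  | 0 => {a ∈ args | ∀ b ∈ args, ¬ att b a}
  | n + 1 => {a ∈ args | defends args att (groundedSeq args att n) a}

/-- The grounded extension `⋃ i, G_i`. -/
def grounded {A : Type} (args : Set A) (att : A → A → Prop) : Set A :=
  ⋃ i, groundedSeq args att i

variable {X : Type}

/-- Cases are pairs of a characterisation (in the partially ordered set `X`, where
`α ≤ β` reads "`α` is less specific than `β`") and one of the two outcomes
(modelled as `Bool`). Attack between labelled cases of the casebase `cb`
(which includes the default argument): `a` attacks `b` iff their outcomes differ,
`a` is at least as specific as `b`, and no case of `cb` with the same outcome as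
`a` is strictly in between. -/
def cbAtt [PartialOrder X] (cb : Set (X × Bool)) (a b : X × Bool) : Prop :=
  a ∈ cb ∧ b ∈ cb ∧ a.2 ≠ b.2 ∧ b.1 ≤ a.1 ∧
    ¬ ∃ g ∈ cb, g.2 = a.2 ∧ b.1 < g.1 ∧ g.1 < a.1

/-- The arguments of the AF mined from casebase `D`, default argument `(dC, dO)`
and a new case: `none` is the new-case argument, `some c` the labelled cases. -/
def minedArgs (D : Set (X × Bool)) (dC : X) (dO : Bool) : Set (Option (X × Bool)) :=
  insert none (Option.some '' insert (dC, dO) D)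

/-- The attack relation of the (regular) AF mined from `D`, default `(dC, dO)` and
new case `N`: labelled cases attack each other as in `cbAtt`, and the new-case
argument attacks exactly the labelled cases `b` that are irrelevant to it,
i.e. with `¬ b.1 ≤ N`. -/
def minedAtt [PartialOrder X] (D : Set (X × Bool)) (dC : X) (dO : Bool) (N : X) :
    Option (X × Bool) → Option (X × Bool) → Prop
  | some a, some b => cbAtt (insert (dC, dO) D) a b
  | none, some b => b ∈ insert (dC, dO) D ∧ ¬ b.1 ≤ N
  | _, none => False

/-- The grounded extension of the AF mined from `D` and new case `N`. -/
def minedGrounded [PartialOrder X] (D : Set (X × Bool)) (dC : X) (dO : Bool) (N : X) :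
    Set (Option (X × Bool)) :=
  grounded (minedArgs D dC dO) (minedAtt D dC dO N)

open Classical in
/-- The AA-CBR_⪰ prediction for `N`: the default outcome `dO` if the default
argument is in the grounded extension, and the other outcome otherwise. -/
noncomputable def predict [PartialOrder X] (D : Set (X × Bool)) (dC : X) (dO : Bool)
    (N : X) : Bool :=
  if some (dC, dO) ∈ minedGrounded D dC dO N then dO else !dO

/-- A casebase is coherent if no characterisation occurs with two outcomes. -/
def coherent (D : Set (X × Bool)) : Prop :=
  ∀ a ∈ D, ∀ b ∈ D, a.1 = b.1 → a.2 = b.2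

/-- A case `a ∈ D` is nearest to `N` iff `a.1 ⪯ N`, maximally so. -/
def nearest [PartialOrder X] (D : Set (X × Bool)) (N : X) (a : X × Bool) : Prop :=
  a ∈ D ∧ a.1 ≤ N ∧ ¬ ∃ b ∈ D, a.1 < b.1 ∧ b.1 ≤ N

end AACBR

namespace AACBR

variable {X : Type}

/-- An example `p` is surprising w.r.t. a casebase `S` iff the AA-CBR_⪰
prediction for its characterisation from `S \ {p}` differs from its outcome. -/
def surprising [PartialOrder X] (dC : X) (dO : Bool) (S : Set (X × Bool))
    (p : X × Bool) : Prop :=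
  predict (S \ {p}) dC dO p.1 ≠ p.2

/-- `D'` is concise w.r.t. `D` iff `D' ⊆ D` and `D'` equals the set of examples
of `D` that are surprising w.r.t. `D'`. -/
def conciseWrt [PartialOrder X] (dC : X) (dO : Bool) (D D' : Set (X × Bool)) : Prop :=
  D' ⊆ D ∧ D' = {p ∈ D | surprising dC dO D' p}

end AACBR

/-!
A prediction for `N` only depends on the cases below `N`: every case not below `N` is attacked
by the unattacked new-case argument, so it never enters the grounded extension, and the attacks
among cases below `N` only involve cases below `N`. If two concise subsets agree strictly below
`p`, coherence makes `D' \ {p}` and `D'' \ {p}` agree on everything below `p`, so `p` is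
surprising for one iff it is for the other; hence `p` lies in both or in neither. A minimal
element of the finite symmetric difference therefore cannot exist.
-/

theorem Set.eq_of_forall_mem_iff_of_lt {α β : Type*} [Preorder β] (f : α → β) {s t : Set α}
    (hfin : (s ∪ t).Finite)
    (h : ∀ p, (∀ q, f q < f p → (q ∈ s ↔ q ∈ t)) → (p ∈ s ↔ p ∈ t)) : s = t := by
  by_contra hne
  obtain ⟨p, hp, hmin⟩ := (hfin.subset Set.symmDiff_subset_union).exists_minimalFor f _
    (Set.symmDiff_nonempty.2 hne)
  have hbelow : ∀ q, f q < f p → (q ∈ s ↔ q ∈ t) := fun q hq => by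
    by_contra hq'
    exact hq.not_ge (hmin (Set.mem_symmDiff.2 (by tauto)) hq.le)
  have := h p hbelow
  rw [Set.mem_symmDiff] at hp
  tauto

namespace AACBR

variable {X : Type} [PartialOrder X]

def AgreeUpTo (N : X) (S T : Set (X × Bool)) : Prop :=
  ∀ q : X × Bool, q.1 ≤ N → (q ∈ S ↔ q ∈ T)

namespace AgreeUpTo

variable {N : X} {S T : Set (X × Bool)}

theorem symm (h : AgreeUpTo N S T) : AgreeUpTo N T S := fun q hq => (h q hq).symm

theorem insert (h : AgreeUpTo N S T) (d : X × Bool) :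
    AgreeUpTo N (insert d S) (insert d T) := fun q hq => by
  simp only [Set.mem_insert_iff, h q hq]

end AgreeUpTo

theorem cbAtt.of_agreeUpTo {N : X} {S T : Set (X × Bool)} (hST : AgreeUpTo N S T)
    {b t : X × Bool} (hb : b.1 ≤ N) : cbAtt S b t → cbAtt T b t := by
  rintro ⟨hbS, htS, hne, htb, hbetween⟩
  refine ⟨(hST b hb).1 hbS, (hST t (htb.trans hb)).1 htS, hne, htb, ?_⟩
  rintro ⟨g, hgT, hg, htg, hgb⟩
  exact hbetween ⟨g, (hST g (hgb.le.trans hb)).2 hgT, hg, htg, hgb⟩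

variable {dC : X} {dO : Bool} {N : X}

omit [PartialOrder X] in
theorem some_mem_minedArgs {S : Set (X × Bool)} {a : X × Bool} :
    some a ∈ minedArgs S dC dO ↔ a ∈ insert (dC, dO) S := by
  simp [minedArgs]

theorem none_mem_groundedSeq (S : Set (X × Bool)) (n : ℕ) :
    none ∈ groundedSeq (minedArgs S dC dO) (minedAtt S dC dO N) n := by
  cases n <;> exact ⟨Set.mem_insert _ _, by rintro (_ | _) - ⟨⟩⟩

theorem some_notMem_groundedSeq_of_not_le {S : Set (X × Bool)} {b : X × Bool} (hb : ¬ b.1 ≤ N)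
    (n : ℕ) : some b ∉ groundedSeq (minedArgs S dC dO) (minedAtt S dC dO N) n := by
  have hatt : minedAtt S dC dO N none (some b) ↔ b ∈ insert (dC, dO) S := by
    simp [minedAtt, hb]
  cases n with
  | zero =>
    rintro ⟨hbS, hunatt⟩
    exact hunatt none (Set.mem_insert _ _) (hatt.2 (some_mem_minedArgs.1 hbS))
  | succ n =>
    rintro ⟨hbS, hdef⟩
    obtain ⟨_ | c, -, hc⟩ := hdef none (Set.mem_insert _ _) (hatt.2 (some_mem_minedArgs.1 hbS))
    all_goals exact hc

/-- An attacker below `N` is an attacker in `S` too and is answered by its transferred defender;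
an attacker not below `N` is answered by the new case. -/
theorem defends_mined_of_agreeUpTo {S T : Set (X × Bool)} (hST : AgreeUpTo N S T)
    {E F : Set (Option (X × Bool))} (hE : ∀ c, some c ∈ E → c.1 ≤ N)
    (hEF : ∀ c, some c ∈ E → some c ∈ F) (hF : none ∈ F) {a : X × Bool} (ha : a.1 ≤ N)
    (hdef : defends (minedArgs S dC dO) (minedAtt S dC dO N) E (some a)) :
    defends (minedArgs T dC dO) (minedAtt T dC dO N) F (some a) := by
  rintro (_ | b) - hba
  · exact absurd ha hba.2
  by_cases hb : b.1 ≤ N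
  · have hbaS : cbAtt (insert (dC, dO) S) b a :=
      cbAtt.of_agreeUpTo (hST.insert _).symm hb hba
    obtain ⟨_ | c, hcE, hcb⟩ := hdef (some b) (some_mem_minedArgs.2 hbaS.1) hbaS
    · exact absurd hb hcb.2
    · exact ⟨some c, hEF c hcE, cbAtt.of_agreeUpTo (hST.insert _) (hE c hcE) hcb⟩
  · exact ⟨none, hF, hba.1, hb⟩

theorem some_mem_groundedSeq_succ_of_agreeUpTo {S T : Set (X × Bool)} (hST : AgreeUpTo N S T)
    (n : ℕ) {a : X × Bool} (ha : a.1 ≤ N)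
    (h : some a ∈ groundedSeq (minedArgs S dC dO) (minedAtt S dC dO N) n) :
    some a ∈ groundedSeq (minedArgs T dC dO) (minedAtt T dC dO N) (n + 1) := by
  have hargs : ∀ {c : X × Bool}, c.1 ≤ N → some c ∈ minedArgs S dC dO →
      some c ∈ minedArgs T dC dO := fun hc hcS =>
    some_mem_minedArgs.2 ((hST.insert _ _ hc).1 (some_mem_minedArgs.1 hcS))
  induction n generalizing a with
  | zero =>
    exact ⟨hargs ha h.1, defends_mined_of_agreeUpTo hST (E := ∅) (fun _ h => h.elim)
      (fun _ h => h.elim) (none_mem_groundedSeq T 0) ha fun b hb hba => (h.2 b hb hba).elim⟩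
  | succ n ih =>
    have hrel : ∀ c, some c ∈ groundedSeq (minedArgs S dC dO) (minedAtt S dC dO N) n → c.1 ≤ N :=
      fun c hc => not_not.1 fun hcN => some_notMem_groundedSeq_of_not_le hcN n hc
    exact ⟨hargs ha h.1, defends_mined_of_agreeUpTo hST hrel (fun c hc => ih (hrel c hc) hc)
      (none_mem_groundedSeq T (n + 1)) ha h.2⟩

theorem some_mem_minedGrounded_of_agreeUpTo {S T : Set (X × Bool)} (hST : AgreeUpTo N S T)
    {a : X × Bool} (ha : a.1 ≤ N) (h : some a ∈ minedGrounded S dC dO N) :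
    some a ∈ minedGrounded T dC dO N := by
  obtain ⟨n, hn⟩ := Set.mem_iUnion.1 h
  exact Set.mem_iUnion.2 ⟨n + 1, some_mem_groundedSeq_succ_of_agreeUpTo hST n ha hn⟩

theorem predict_congr {S T : Set (X × Bool)} (hdC : dC ≤ N) (hST : AgreeUpTo N S T) :
    predict S dC dO N = predict T dC dO N := by
  have hdefault :
      some (dC, dO) ∈ minedGrounded S dC dO N ↔ some (dC, dO) ∈ minedGrounded T dC dO N :=
    ⟨some_mem_minedGrounded_of_agreeUpTo hST hdC, some_mem_minedGrounded_of_agreeUpTo hST.symm hdC⟩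
  classical exact if_congr hdefault rfl rfl

theorem surprising_congr {S T : Set (X × Bool)} {p : X × Bool} (hdC : dC ≤ p.1)
    (hST : AgreeUpTo p.1 (S \ {p}) (T \ {p})) :
    surprising dC dO S p ↔ surprising dC dO T p := by
  rw [surprising, surprising, predict_congr hdC hST]

theorem conciseWrt.mem_iff {D D' : Set (X × Bool)} (h : conciseWrt dC dO D D') {p : X × Bool} :
    p ∈ D' ↔ p ∈ D ∧ surprising dC dO D' p :=
  Set.ext_iff.1 h.2 p

omit [PartialOrder X] in
theorem coherent.notMem_sdiff_singleton {D S : Set (X × Bool)} (hcoh : coherent D) (hS : S ⊆ D)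
    {p q : X × Bool} (hp : p ∈ D) (hqp : q.1 = p.1) : q ∉ S \ {p} := fun hq =>
  hq.2 (Prod.ext hqp (hcoh q (hS hq.1) p hp hqp))

end AACBR

namespace AACBR

/-- Uniqueness of concise subsets: given a coherent casebase `D`, if `D' ⊆ D` is
concise w.r.t. `D`, then `D'` is the unique such subset. -/
theorem concise_unique {X : Type} [PartialOrder X]
    (D : Set (X × Bool)) (hfin : D.Finite) (hcoh : coherent D)
    (dC : X) (dO : Bool) (hleast : ∀ x : X, dC ≤ x)
    (D' D'' : Set (X × Bool))
    (h' : conciseWrt dC dO D D') (h'' : conciseWrt dC dO D D'') :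
    D' = D'' := by
  refine Set.eq_of_forall_mem_iff_of_lt Prod.fst (hfin.subset (Set.union_subset h'.1 h''.1))
    fun p hbelow => ?_
  rw [h'.mem_iff, h''.mem_iff]
  refine and_congr_right fun hpD => surprising_congr (hleast p.1) fun q hq => ?_
  rcases hq.lt_or_eq with hlt | hqp
  · simp only [Set.mem_sdiff, hbelow q hlt]
  · exact iff_of_false (hcoh.notMem_sdiff_singleton h'.1 hpD hqp)
      (hcoh.notMem_sdiff_singleton h''.1 hpD hqp)

end AACBR
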